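/- For every n ≥ 1, every 1 ≤ p ≤ 2, every subset 𝒥 ⊆ {1,…,n} and every function f : Ω_n → ℂ, ‖𝒱_𝒥(f)‖_p ≤ (π/4) ‖ |∇_𝒥 f| ‖_p, where 𝒱_𝒥(f) = f − 𝒫_{𝒥̄}(f) is the part of f whose Walsh spectrum meets 𝒥. -/

import Mathlib

open Real Finset

namespace DiscreteCube

variable {n : ℕ}

/-- The point of the cube `{-1,1}^n` encoded by `x : Fin n → Bool`:
coordinate `j` is `1` if `x j = true` and `-1` otherwise. -/
def sgn (b : Bool) : ℂ := if b then 1 else -1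

/-- Negate the `j`-th coordinate. -/
def flip (j : Fin n) (x : Fin n → Bool) : Fin n → Bool :=
  Function.update x j (!(x j))

/-- Discrete partial derivative `(∂_j f)(x) = f(x) - f(x e_j)`. -/
def pd (j : Fin n) (f : (Fin n → Bool) → ℂ) (x : Fin n → Bool) : ℂ :=
  f x - f (flip j x)

/-- Length of the discrete gradient, `|∇f|(x) = (Σ_j |(∂_j f)(x)|²)^{1/2}`. -/
noncomputable def gradLen (f : (Fin n → Bool) → ℂ) (x : Fin n → Bool) : ℝ :=
  Real.sqrt (∑ j : Fin n, ‖pd j f x‖ ^ 2)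

/-- Expectation with respect to the uniform probability on the cube. -/
noncomputable def expect (f : (Fin n → Bool) → ℂ) : ℂ :=
  (∑ x : Fin n → Bool, f x) / 2 ^ n

/-- `L^p` norm (`1 ≤ p < ∞`) of a complex-valued function on the cube. -/
noncomputable def cLp (p : ℝ) (f : (Fin n → Bool) → ℂ) : ℝ :=
  ((∑ x : Fin n → Bool, ‖f x‖ ^ p) / 2 ^ n) ^ (1 / p)

/-- `L^p` norm (`1 ≤ p < ∞`) of a real-valued function on the cube. -/
noncomputable def rLp (p : ℝ) (g : (Fin n → Bool) → ℝ) : ℝ :=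
  ((∑ x : Fin n → Bool, |g x| ^ p) / 2 ^ n) ^ (1 / p)

end DiscreteCube

namespace DiscreteCube

variable {n : ℕ}

/-- Walsh function `ω_A(x) = ∏_{j∈A} x_j`. -/
def walsh (A : Finset (Fin n)) (x : Fin n → Bool) : ℂ := ∏ j ∈ A, sgn (x j)

/-- Walsh–Fourier coefficient `f̂(A) = 𝔼[f·ω_A]`. -/
noncomputable def coeff (f : (Fin n → Bool) → ℂ) (A : Finset (Fin n)) : ℂ :=
  (∑ x : Fin n → Bool, f x * walsh A x) / 2 ^ n

/-- The operator `cos^{Δ/4}θ`: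
`cos^{Δ/4}θ(f) = Σ_A cos^{|A|}θ · f̂(A) ω_A` (the `A = ∅` term is `f̂(∅)`). -/
noncomputable def cosD (θ : ℝ) (f : (Fin n → Bool) → ℂ) (x : Fin n → Bool) : ℂ :=
  ∑ A : Finset (Fin n), (Real.cos θ : ℂ) ^ A.card * coeff f A * walsh A x

/-- Fractional power of the discrete Laplacian, `Δ^β f = Σ_{A≠∅} (4|A|)^β f̂(A) ω_A`
(for `β > 0` the `A = ∅` term vanishes since `0^β = 0`). -/
noncomputable def deltaPow (β : ℝ) (f : (Fin n → Bool) → ℂ) (x : Fin n → Bool) : ℂ :=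
  ∑ A : Finset (Fin n), (((4 * (A.card : ℝ)) ^ β : ℝ) : ℂ) * coeff f A * walsh A x

/-- The constant `K_α = (1/Γ(1−α)) ∫_0^{π/2} (−log cos θ)^{−α} dθ`. -/
noncomputable def Kconst (α : ℝ) : ℝ :=
  (1 / Real.Gamma (1 - α)) * ∫ θ in (0:ℝ)..(Real.pi / 2), (-Real.log (Real.cos θ)) ^ (-α)

/-- The constant `k_β = (1/Γ(β)) ∫_0^{π/2} (−log cos θ)^{β−1} dθ`. -/
noncomputable def kconst (β : ℝ) : ℝ :=
  (1 / Real.Gamma β) * ∫ θ in (0:ℝ)..(Real.pi / 2), (-Real.log (Real.cos θ)) ^ (β - 1)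

end DiscreteCube

namespace DiscreteCube

/-- The part of `f` whose Walsh spectrum meets `𝒥`:
`𝒱_𝒥(f) = Σ_{A∩𝒥≠∅} f̂(A) ω_A = f − 𝒫_{𝒥̄}(f)`. -/
noncomputable def specPart {n : ℕ} (J : Finset (Fin n)) (f : (Fin n → Bool) → ℂ)
    (x : Fin n → Bool) : ℂ :=
  ∑ A ∈ Finset.univ.filter (fun A : Finset (Fin n) => (A ∩ J).Nonempty),
    coeff f A * walsh A x

/-- Partial gradient length `|∇_𝒥 f|(x) = (Σ_{j∈𝒥} |(∂_j f)(x)|²)^{1/2}`. -/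
noncomputable def gradLenJ {n : ℕ} (J : Finset (Fin n)) (f : (Fin n → Bool) → ℂ)
    (x : Fin n → Bool) : ℝ :=
  Real.sqrt (∑ j ∈ J, ‖pd j f x‖ ^ 2)

end DiscreteCube

/-!
Write `T_c f (x) = 𝔼_η Σ_{j ∈ 𝒥} (η_j - c) / (1 - c²) · ∂_j f (x η)`, where the coordinates `η_j`,
`j ∈ 𝒥`, are independent signs of mean `c` and the others equal `1`. Since `∂_j ω_A = 2 ω_A` for
`j ∈ A` and `ω_A(xη) = ω_A(x) ω_A(η)`, one finds `T_c ω_A = 2k c^{k-1} ω_A` with `k = |A ∩ 𝒥|`;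
as `∫_0^{π/2} k cos^{k-1}θ sin θ dθ = 1` for `k ≥ 1` (and `0` for `k = 0`),
`𝒱_𝒥 f = ∫_0^{π/2} (sin θ / 2) T_{cos θ} f dθ`.

The weights `(η_j - c) / (1 - c²)` are orthogonal with second moment `1 / sin² θ` when
`c = cos θ`. Jensen's inequality (`p ≥ 1`), the power-mean inequality (`p ≤ 2`) and translation
invariance of the uniform measure therefore give `‖T_{cos θ} f‖_p ≤ ‖∇_𝒥 f‖_p / sin θ`, and
Minkowski's inequality for the integral yields the constant `(1/2) · (π/2) = π/4`.
-/

section PowerMeans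

variable {ι : Type*} (s : Finset ι) {w : ι → ℝ} {p : ℝ}

lemma norm_sum_smul_rpow_le {E : Type*} [SeminormedAddCommGroup E] [NormedSpace ℝ E]
    (hw : ∀ i ∈ s, 0 ≤ w i) (hw1 : ∑ i ∈ s, w i = 1) (v : ι → E) (hp : 1 ≤ p) :
    ‖∑ i ∈ s, w i • v i‖ ^ p ≤ ∑ i ∈ s, w i * ‖v i‖ ^ p := by
  have hnorm : ‖∑ i ∈ s, w i • v i‖ ≤ ∑ i ∈ s, w i * ‖v i‖ :=
    (norm_sum_le _ _).trans_eq <| Finset.sum_congr rfl fun i hi => by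
      rw [norm_smul, Real.norm_of_nonneg (hw i hi)]
  calc ‖∑ i ∈ s, w i • v i‖ ^ p ≤ (∑ i ∈ s, w i * ‖v i‖) ^ p := by gcongr
    _ ≤ ∑ i ∈ s, w i * ‖v i‖ ^ p :=
        Real.rpow_arith_mean_le_arith_mean_rpow s _ _ hw hw1 (fun i _ => norm_nonneg _) hp

lemma sum_mul_rpow_le_sum_mul_sq_rpow (hw : ∀ i ∈ s, 0 ≤ w i) (hw1 : ∑ i ∈ s, w i = 1)
    {z : ι → ℝ} (hz : ∀ i ∈ s, 0 ≤ z i) (hp0 : 0 < p) (hp2 : p ≤ 2) :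
    ∑ i ∈ s, w i * z i ^ p ≤ (∑ i ∈ s, w i * z i ^ 2) ^ (p / 2) := by
  have hq : 1 ≤ 2 / p := by rw [le_div_iff₀ hp0]; linarith
  have hpow : ∀ i ∈ s, (z i ^ p) ^ (2 / p) = z i ^ 2 := fun i hi => by
    rw [← Real.rpow_mul (hz i hi), mul_div_cancel₀ _ hp0.ne', Real.rpow_two]
  calc ∑ i ∈ s, w i * z i ^ p ≤ (∑ i ∈ s, w i * (z i ^ p) ^ (2 / p)) ^ (1 / (2 / p)) :=
        Real.arith_mean_le_rpow_mean s w _ hw hw1 (fun i hi => Real.rpow_nonneg (hz i hi) p) hq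
    _ = (∑ i ∈ s, w i * z i ^ 2) ^ (p / 2) := by
        rw [one_div_div, Finset.sum_congr rfl fun i hi => congrArg (w i * ·) (hpow i hi)]

end PowerMeans

lemma integral_natCast_mul_cos_pow_mul_sin (k : ℕ) :
    ∫ θ in (0 : ℝ)..π / 2, k * cos θ ^ (k - 1) * sin θ = if k = 0 then 0 else 1 := by
  rcases Nat.eq_zero_or_pos k with rfl | hk
  · simp
  have hderiv : ∀ θ ∈ Set.uIcc 0 (π / 2),
      HasDerivAt (fun t => -cos t ^ k) (k * cos θ ^ (k - 1) * sin θ) θ := fun θ _ =>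
    ((Real.hasDerivAt_cos θ).fun_pow k).fun_neg.congr_deriv (by ring)
  rw [intervalIntegral.integral_eq_sub_of_hasDerivAt hderiv
    (Continuous.intervalIntegrable (by fun_prop) _ _), if_neg hk.ne',
    cos_pi_div_two, cos_zero, zero_pow hk.ne']
  ring

namespace DiscreteCube

variable {n : ℕ}

section Characters

def pmul (x y : Fin n → Bool) : Fin n → Bool := fun j => x j == y j

lemma pmul_pmul_cancel_right (x y : Fin n → Bool) : pmul (pmul x y) y = x := by
  funext j; simp only [pmul]; cases x j <;> cases y j <;> rfl

lemma sgn_beq (a b : Bool) : sgn (a == b) = sgn a * sgn b := by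
  cases a <;> cases b <;> simp [sgn]

lemma sgn_not (b : Bool) : sgn (!b) = -sgn b := by
  cases b <;> simp [sgn]

lemma walsh_pmul (A : Finset (Fin n)) (x y : Fin n → Bool) :
    walsh A (pmul x y) = walsh A x * walsh A y := by
  simp only [walsh, pmul, sgn_beq, Finset.prod_mul_distrib]

lemma walsh_eq_prod_univ (A : Finset (Fin n)) (x : Fin n → Bool) :
    walsh A x = ∏ j, if j ∈ A then sgn (x j) else 1 := by
  rw [Finset.prod_ite_mem, Finset.univ_inter, walsh]

lemma sum_comp_pmul_right {M : Type*} [AddCommMonoid M] (g : (Fin n → Bool) → M)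
    (y : Fin n → Bool) : ∑ x, g (pmul x y) = ∑ x, g x :=
  Fintype.sum_bijective _ (Function.Involutive.bijective fun x => pmul_pmul_cancel_right x y)
    _ _ fun _ => rfl

lemma sum_prod_bool {R : Type*} [CommSemiring R] (h : Fin n → Bool → R) :
    ∑ x : Fin n → Bool, ∏ j, h j (x j) = ∏ j, (h j true + h j false) := by
  simp only [← Fintype.sum_bool, Fintype.prod_sum]

lemma walsh_flip (j : Fin n) (A : Finset (Fin n)) (x : Fin n → Bool) :
    walsh A (flip j x) = (if j ∈ A then -1 else 1) * walsh A x := by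
  have hflip : ∀ i, sgn (flip j x i) = (if i = j then -1 else 1) * sgn (x i) := by
    intro i
    by_cases hij : i = j
    · subst hij; simp [flip, sgn_not]
    · simp [flip, hij]
  simp only [walsh, hflip, Finset.prod_mul_distrib, Finset.prod_ite_eq']

lemma pd_walsh (j : Fin n) (A : Finset (Fin n)) (x : Fin n → Bool) :
    pd j (walsh A) x = if j ∈ A then 2 * walsh A x else 0 := by
  rw [pd, walsh_flip]
  split_ifs <;> ring

lemma sum_walsh (z : Fin n → Bool) :
    ∑ A, walsh A z = if z = fun _ => true then 2 ^ n else 0 := by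
  have hfactor : ∀ b, 1 + sgn b = if b = true then 2 else 0 := by
    intro b; cases b <;> norm_num [sgn]
  simp only [walsh]
  rw [← Finset.powerset_univ, ← Finset.prod_one_add]
  simp only [hfactor, Fintype.prod_ite_zero, Finset.prod_const, Finset.card_univ,
    Fintype.card_fin, funext_iff]

lemma sum_walsh_mul_walsh (x y : Fin n → Bool) :
    ∑ A, walsh A y * walsh A x = if y = x then 2 ^ n else 0 := by
  simp only [← walsh_pmul, sum_walsh]
  congr 1
  refine propext ⟨fun h => funext fun j => ?_, fun h => h ▸ funext fun j => ?_⟩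
  · have := congrFun h j; cases hx : x j <;> cases hy : y j <;> simp_all [pmul]
  · simp [pmul]

lemma sum_coeff_mul_walsh (f : (Fin n → Bool) → ℂ) (x : Fin n → Bool) :
    ∑ A, coeff f A * walsh A x = f x := by
  simp only [coeff, Finset.sum_div, Finset.sum_mul]
  rw [Finset.sum_comm]
  simp only [mul_assoc, div_mul_eq_mul_div, ← Finset.sum_div, ← Finset.mul_sum,
    sum_walsh_mul_walsh]
  simp

lemma pd_eq_sum_coeff_mul_pd_walsh (f : (Fin n → Bool) → ℂ) (j : Fin n) (x : Fin n → Bool) :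
    pd j f x = ∑ A, coeff f A * pd j (walsh A) x := by
  simp only [pd, mul_sub, Finset.sum_sub_distrib, sum_coeff_mul_walsh]

end Characters

section BiasedCube

variable {c : ℝ}

noncomputable def biasProb (c : ℝ) (b : Bool) : ℝ := if b then (1 + c) / 2 else (1 - c) / 2

/-- For `b = ±1` this is `(b - c) / (1 - c²)`: the centred sign, normalised so that its
product with the sign has mean one. -/
noncomputable def centredSign (c : ℝ) (b : Bool) : ℝ := if b then (1 + c)⁻¹ else -(1 - c)⁻¹

noncomputable def coordProb (J : Finset (Fin n)) (c : ℝ) (j : Fin n) (b : Bool) : ℝ :=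
  if j ∈ J then biasProb c b else if b then 1 else 0

noncomputable def biasWeight (J : Finset (Fin n)) (c : ℝ) (η : Fin n → Bool) : ℝ :=
  ∏ j, coordProb J c j (η j)

lemma biasWeight_nonneg (hc : c ^ 2 ≤ 1) (J : Finset (Fin n)) (η : Fin n → Bool) :
    0 ≤ biasWeight J c η := by
  have : -1 ≤ c ∧ c ≤ 1 := ⟨by nlinarith, by nlinarith⟩
  refine Finset.prod_nonneg fun j _ => ?_
  unfold coordProb biasProb
  split_ifs <;> linarith

lemma sum_biasWeight (J : Finset (Fin n)) (c : ℝ) : ∑ η, biasWeight J c η = 1 := by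
  refine (sum_prod_bool _).trans (Finset.prod_eq_one fun j _ => ?_)
  by_cases hj : j ∈ J <;>
    simp only [coordProb, biasProb, hj, ↓reduceIte, Bool.false_eq_true] <;> ring

lemma sum_biasWeight_mul_prod (J : Finset (Fin n)) (c : ℝ) (h : Fin n → Bool → ℂ) :
    ∑ η, (biasWeight J c η : ℂ) * ∏ i, h i (η i)
      = ∏ i, ((coordProb J c i true : ℂ) * h i true + coordProb J c i false * h i false) := by
  simp only [biasWeight, Complex.ofReal_prod, ← Finset.prod_mul_distrib]
  exact sum_prod_bool fun i b => (coordProb J c i b : ℂ) * h i b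

lemma sum_biasWeight_mul_walsh_mul_centredSign (hc : c ^ 2 < 1) {J A : Finset (Fin n)}
    {j : Fin n} (hj : j ∈ J ∩ A) :
    ∑ η, (biasWeight J c η : ℂ) * walsh A η * centredSign c (η j)
      = (c : ℂ) ^ ((J ∩ A).card - 1) := by
  obtain ⟨hjJ, hjA⟩ := Finset.mem_inter.1 hj
  have hadd : (1 + c : ℂ) ≠ 0 := by exact_mod_cast (show 1 + c ≠ 0 by nlinarith)
  have hsub : (1 - c : ℂ) ≠ 0 := by exact_mod_cast (show 1 - c ≠ 0 by nlinarith)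
  set factor : Fin n → Bool → ℂ := fun i b =>
    (if i ∈ A then sgn b else 1) * if i = j then (centredSign c b : ℂ) else 1
  calc ∑ η, (biasWeight J c η : ℂ) * walsh A η * centredSign c (η j)
      = ∑ η, (biasWeight J c η : ℂ) * ∏ i, factor i (η i) := by
        simp only [factor, Finset.prod_mul_distrib, Finset.prod_ite_eq', Finset.mem_univ, if_true,
          walsh_eq_prod_univ, mul_assoc]
    _ = _ := sum_biasWeight_mul_prod J c factor
    _ = ∏ i, if i ∈ (J ∩ A).erase j then (c : ℂ) else 1 := by
        refine Finset.prod_congr rfl fun i _ => ?_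
        by_cases hij : i = j
        · subst hij
          simp only [factor, coordProb, biasProb, centredSign, sgn, hjJ, hjA, Finset.mem_erase,
            ne_eq, not_true_eq_false, false_and, ↓reduceIte, Bool.false_eq_true]
          push_cast
          field_simp
          ring
        · by_cases hiJ : i ∈ J <;> by_cases hiA : i ∈ A <;>
            simp only [factor, coordProb, biasProb, sgn, hij, hiJ, hiA, Finset.mem_erase,
              Finset.mem_inter, ne_eq, not_false_eq_true, and_self, and_true, and_false,
              ↓reduceIte, Bool.false_eq_true] <;> push_cast <;> ring
    _ = (c : ℂ) ^ ((J ∩ A).card - 1) := by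
        rw [Finset.prod_ite_mem, Finset.univ_inter, Finset.prod_const,
          Finset.card_erase_of_mem hj]

lemma sum_biasWeight_mul_centredSign_mul_centredSign (hc : c ^ 2 < 1) {J : Finset (Fin n)}
    {j k : Fin n} (hj : j ∈ J) (hk : k ∈ J) :
    ∑ η, (biasWeight J c η : ℂ) * centredSign c (η j) * centredSign c (η k)
      = if j = k then ((1 - c ^ 2)⁻¹ : ℂ) else 0 := by
  have hadd : (1 + c : ℂ) ≠ 0 := by exact_mod_cast (show 1 + c ≠ 0 by nlinarith)
  have hsub : (1 - c : ℂ) ≠ 0 := by exact_mod_cast (show 1 - c ≠ 0 by nlinarith)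
  have hsq : (1 - c ^ 2 : ℂ) ≠ 0 := by exact_mod_cast (show 1 - c ^ 2 ≠ 0 by nlinarith)
  set factor : Fin n → Bool → ℂ := fun i b =>
    (if i = j then (centredSign c b : ℂ) else 1) * if i = k then (centredSign c b : ℂ) else 1
  calc ∑ η, (biasWeight J c η : ℂ) * centredSign c (η j) * centredSign c (η k)
      = ∑ η, (biasWeight J c η : ℂ) * ∏ i, factor i (η i) := by
        simp only [factor, Finset.prod_mul_distrib, Finset.prod_ite_eq', Finset.mem_univ, if_true,
          mul_assoc]
    _ = _ := sum_biasWeight_mul_prod J c factor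
    _ = if j = k then ((1 - c ^ 2)⁻¹ : ℂ) else 0 := by
        by_cases hjk : j = k
        · subst hjk
          rw [if_pos rfl, Fintype.prod_eq_single j fun i hij => ?_]
          · simp only [factor, coordProb, biasProb, centredSign, hj, ↓reduceIte, Bool.false_eq_true]
            push_cast
            field_simp
            ring
          · by_cases hiJ : i ∈ J <;>
              simp only [factor, coordProb, biasProb, hij, hiJ, ↓reduceIte, Bool.false_eq_true] <;>
              push_cast <;> ring
        · rw [if_neg hjk]
          refine Finset.prod_eq_zero (Finset.mem_univ j) ?_
          simp only [factor, coordProb, biasProb, centredSign, hj, hjk, ↓reduceIte,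
            Bool.false_eq_true]
          push_cast
          field_simp
          ring

end BiasedCube

section GradientAverage

variable {c : ℝ}

noncomputable def gradientAverage (J : Finset (Fin n)) (c : ℝ) (f : (Fin n → Bool) → ℂ)
    (x : Fin n → Bool) : ℂ :=
  ∑ η, (biasWeight J c η : ℂ) * ∑ j ∈ J, (centredSign c (η j) : ℂ) * pd j f (pmul x η)

lemma gradientAverage_walsh (hc : c ^ 2 < 1) (J A : Finset (Fin n)) (x : Fin n → Bool) :
    gradientAverage J c (walsh A) x
      = 2 * (A ∩ J).card * (c : ℂ) ^ ((A ∩ J).card - 1) * walsh A x := by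
  have hpd : ∀ η, ∑ j ∈ J, (centredSign c (η j) : ℂ) * pd j (walsh A) (pmul x η)
      = ∑ j ∈ J ∩ A, 2 * walsh A x * (walsh A η * centredSign c (η j)) := by
    intro η
    simp only [pd_walsh, walsh_pmul, mul_ite, mul_zero, Finset.sum_ite_mem]
    exact Finset.sum_congr rfl fun j _ => by ring
  calc gradientAverage J c (walsh A) x
      = ∑ j ∈ J ∩ A, 2 * walsh A x *
          ∑ η, (biasWeight J c η : ℂ) * walsh A η * centredSign c (η j) := by
        simp only [gradientAverage, hpd, Finset.mul_sum]
        rw [Finset.sum_comm]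
        exact Finset.sum_congr rfl fun j _ => Finset.sum_congr rfl fun η _ => by ring
    _ = ∑ j ∈ J ∩ A, 2 * walsh A x * (c : ℂ) ^ ((J ∩ A).card - 1) :=
        Finset.sum_congr rfl fun j hj => by rw [sum_biasWeight_mul_walsh_mul_centredSign hc hj]
    _ = 2 * (A ∩ J).card * (c : ℂ) ^ ((A ∩ J).card - 1) * walsh A x := by
        rw [Finset.sum_const, nsmul_eq_mul, Finset.inter_comm]
        ring

lemma gradientAverage_eq_sum_coeff (J : Finset (Fin n)) (c : ℝ) (f : (Fin n → Bool) → ℂ)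
    (x : Fin n → Bool) :
    gradientAverage J c f x = ∑ A, coeff f A * gradientAverage J c (walsh A) x := by
  simp only [gradientAverage, pd_eq_sum_coeff_mul_pd_walsh f, Finset.mul_sum]
  conv_rhs => rw [Finset.sum_comm]
  refine Finset.sum_congr rfl fun η _ => ?_
  rw [Finset.sum_comm]
  exact Finset.sum_congr rfl fun A _ => Finset.sum_congr rfl fun j _ => by ring

lemma gradientAverage_eq_sum (hc : c ^ 2 < 1) (J : Finset (Fin n)) (f : (Fin n → Bool) → ℂ)
    (x : Fin n → Bool) :
    gradientAverage J c f x
      = ∑ A, 2 * (A ∩ J).card * (c : ℂ) ^ ((A ∩ J).card - 1) * coeff f A * walsh A x := by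
  rw [gradientAverage_eq_sum_coeff]
  exact Finset.sum_congr rfl fun A _ => by rw [gradientAverage_walsh hc]; ring

open ComplexConjugate in
lemma sum_biasWeight_mul_norm_sum_sq (hc : c ^ 2 < 1) (J : Finset (Fin n)) (a : Fin n → ℂ) :
    ∑ η, biasWeight J c η * ‖∑ j ∈ J, (centredSign c (η j) : ℂ) * a j‖ ^ 2
      = (1 - c ^ 2)⁻¹ * ∑ j ∈ J, ‖a j‖ ^ 2 := by
  have hsq : ∀ z : ℂ, ((‖z‖ ^ 2 : ℝ) : ℂ) = z * conj z := fun z => by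
    rw [Complex.mul_conj, Complex.sq_norm]
  apply Complex.ofReal_injective
  push_cast [Complex.ofReal_mul, hsq]
  calc ∑ η, (biasWeight J c η : ℂ) * ((∑ j ∈ J, (centredSign c (η j) : ℂ) * a j) *
          conj (∑ k ∈ J, (centredSign c (η k) : ℂ) * a k))
      = ∑ k ∈ J, ∑ j ∈ J, (∑ η, (biasWeight J c η : ℂ) * centredSign c (η j) * centredSign c (η k))
          * (a j * conj (a k)) := by
        simp only [map_sum, map_mul, Complex.conj_ofReal, Finset.mul_sum, Finset.sum_mul]
        rw [Finset.sum_comm]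
        refine Finset.sum_congr rfl fun k _ => ?_
        rw [Finset.sum_comm]
        exact Finset.sum_congr rfl fun j _ => Finset.sum_congr rfl fun η _ => by ring
    _ = ∑ k ∈ J, ∑ j ∈ J, (if j = k then ((1 - c ^ 2)⁻¹ : ℂ) else 0) * (a j * conj (a k)) :=
        Finset.sum_congr rfl fun k hk => Finset.sum_congr rfl fun j hj => by
          rw [sum_biasWeight_mul_centredSign_mul_centredSign hc hj hk]
    _ = (1 - c ^ 2 : ℂ)⁻¹ * ∑ j ∈ J, a j * conj (a j) := by
        simp [ite_mul, Finset.mul_sum]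

lemma sum_norm_gradientAverage_rpow_le {s : ℝ} (hcs : c ^ 2 + s ^ 2 = 1) (hs : 0 < s) {p : ℝ}
    (hp1 : 1 ≤ p) (hp2 : p ≤ 2) (J : Finset (Fin n)) (f : (Fin n → Bool) → ℂ) :
    ∑ x, ‖gradientAverage J c f x‖ ^ p ≤ ∑ x, (s⁻¹ * gradLenJ J f x) ^ p := by
  have hc : c ^ 2 < 1 := by nlinarith
  have hW : ∀ η ∈ Finset.univ, 0 ≤ biasWeight J c η := fun η _ => biasWeight_nonneg hc.le J η
  set V : (Fin n → Bool) → (Fin n → Bool) → ℝ := fun η z =>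
    ‖∑ j ∈ J, (centredSign c (η j) : ℂ) * pd j f z‖ with hV
  have hjensen : ∀ x, ‖gradientAverage J c f x‖ ^ p
      ≤ ∑ η, biasWeight J c η * V η (pmul x η) ^ p := fun x => by
    simpa only [gradientAverage, hV, Complex.real_smul] using
      norm_sum_smul_rpow_le Finset.univ hW (sum_biasWeight J c)
        (fun η => ∑ j ∈ J, (centredSign c (η j) : ℂ) * pd j f (pmul x η)) hp1
  have hL2 : ∀ z, ∑ η, biasWeight J c η * V η z ^ p ≤ (s⁻¹ * gradLenJ J f z) ^ p := fun z => by
    have hgrad : gradLenJ J f z ^ 2 = ∑ j ∈ J, ‖pd j f z‖ ^ 2 :=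
      Real.sq_sqrt (Finset.sum_nonneg fun j _ => by positivity)
    have hG : 0 ≤ s⁻¹ * gradLenJ J f z := by unfold gradLenJ; positivity
    calc ∑ η, biasWeight J c η * V η z ^ p
        ≤ (∑ η, biasWeight J c η * V η z ^ 2) ^ (p / 2) :=
          sum_mul_rpow_le_sum_mul_sq_rpow _ hW (sum_biasWeight J c) (fun η _ => norm_nonneg _)
            (by linarith) hp2
      _ = ((s⁻¹ * gradLenJ J f z) ^ 2) ^ (p / 2) := by
          rw [hV, sum_biasWeight_mul_norm_sum_sq hc, mul_pow, hgrad, inv_pow,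
            show 1 - c ^ 2 = s ^ 2 by linarith]
      _ = (s⁻¹ * gradLenJ J f z) ^ p := by
          rw [← Real.rpow_natCast, ← Real.rpow_mul hG, Nat.cast_ofNat,
            mul_div_cancel₀ p two_ne_zero]
  calc ∑ x, ‖gradientAverage J c f x‖ ^ p
      ≤ ∑ x, ∑ η, biasWeight J c η * V η (pmul x η) ^ p := Finset.sum_le_sum fun x _ => hjensen x
    _ = ∑ η, ∑ z, biasWeight J c η * V η z ^ p := by
        rw [Finset.sum_comm]
        exact Finset.sum_congr rfl fun η _ =>
          sum_comp_pmul_right (fun z => biasWeight J c η * V η z ^ p) η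
    _ = ∑ z, ∑ η, biasWeight J c η * V η z ^ p := Finset.sum_comm
    _ ≤ ∑ z, (s⁻¹ * gradLenJ J f z) ^ p := Finset.sum_le_sum fun z _ => hL2 z

end GradientAverage

section LpNorm

variable {p : ℝ}

abbrev toLp (p : ℝ) (g : (Fin n → Bool) → ℂ) : PiLp (ENNReal.ofReal p) fun _ : Fin n → Bool => ℂ :=
  WithLp.toLp _ g

lemma norm_toLp (hp : 0 < p) (g : (Fin n → Bool) → ℂ) :
    ‖toLp p g‖ = (∑ x, ‖g x‖ ^ p) ^ (1 / p) := by
  rw [PiLp.norm_eq_sum (by rwa [ENNReal.toReal_ofReal hp.le]), ENNReal.toReal_ofReal hp.le]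

lemma cLp_eq_norm_toLp_div (hp : 0 < p) (g : (Fin n → Bool) → ℂ) :
    cLp p g = ‖toLp p g‖ / ((2 : ℝ) ^ n) ^ (1 / p) := by
  rw [norm_toLp hp, cLp, Real.div_rpow (by positivity) (by positivity)]

lemma rLp_eq_cLp (p : ℝ) (g : (Fin n → Bool) → ℝ) : rLp p g = cLp p fun x => (g x : ℂ) := by
  simp [rLp, cLp, Complex.norm_real]

lemma norm_toLp_gradientAverage_le {c s : ℝ} (hcs : c ^ 2 + s ^ 2 = 1) (hs : 0 < s)
    (hp1 : 1 ≤ p) (hp2 : p ≤ 2) (J : Finset (Fin n)) (f : (Fin n → Bool) → ℂ) :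
    ‖toLp p (gradientAverage J c f)‖ ≤ s⁻¹ * ‖toLp p fun x => (gradLenJ J f x : ℂ)‖ := by
  have : Fact (1 ≤ ENNReal.ofReal p) := ⟨ENNReal.one_le_ofReal.2 hp1⟩
  have hp : 0 < p := by linarith
  have hG : ∀ x, 0 ≤ gradLenJ J f x := fun x => Real.sqrt_nonneg _
  calc ‖toLp p (gradientAverage J c f)‖
      ≤ (∑ x, (s⁻¹ * gradLenJ J f x) ^ p) ^ (1 / p) := by
        rw [norm_toLp hp]
        exact Real.rpow_le_rpow (by positivity)
          (sum_norm_gradientAverage_rpow_le hcs hs hp1 hp2 J f) (by positivity)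
    _ = ‖s⁻¹ • toLp p fun x => (gradLenJ J f x : ℂ)‖ := by
        rw [← WithLp.toLp_smul, norm_toLp hp]
        simp [Complex.norm_real, abs_of_pos hs, abs_of_nonneg (hG _)]
    _ = s⁻¹ * ‖toLp p fun x => (gradLenJ J f x : ℂ)‖ := by
        rw [norm_smul, Real.norm_of_nonneg (inv_nonneg.2 hs.le)]

lemma toLp_specPart_eq_integral [Fact (1 ≤ ENNReal.ofReal p)] (J : Finset (Fin n))
    (f : (Fin n → Bool) → ℂ) :
    toLp p (specPart J f)
      = ∫ θ in (0 : ℝ)..π / 2, (sin θ / 2) • toLp p (gradientAverage J (cos θ) f) := by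
  have hspectral : Set.EqOn
      (fun θ => (sin θ / 2) • toLp p (gradientAverage J (cos θ) f))
      (fun θ => ∑ A, ((A ∩ J).card * cos θ ^ ((A ∩ J).card - 1) * sin θ) •
        toLp p fun x => coeff f A * walsh A x)
      (Set.uIcc 0 (π / 2)) := by
    -- at `θ = 0` both sides vanish, although `c = 1` makes `centredSign` degenerate
    intro θ hθ
    rw [Set.uIcc_of_le (by positivity)] at hθ
    rcases hθ.1.eq_or_lt with rfl | hθ0
    · simp
    have hsin : 0 < sin θ := sin_pos_of_pos_of_lt_pi hθ0 (by linarith [hθ.2, pi_pos])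
    have hc : cos θ ^ 2 < 1 := by nlinarith [sin_sq_add_cos_sq θ]
    ext x
    simp only [PiLp.smul_apply, WithLp.ofLp_sum, Finset.sum_apply, Complex.real_smul,
      gradientAverage_eq_sum hc, Finset.mul_sum]
    refine Fintype.sum_congr _ _ fun A => ?_
    push_cast
    ring
  rw [intervalIntegral.integral_congr hspectral, intervalIntegral.integral_finsetSum
    fun A _ => Continuous.intervalIntegrable (by fun_prop) _ _]
  simp only [intervalIntegral.integral_smul_const, integral_natCast_mul_cos_pow_mul_sin]
  ext x
  simp only [specPart, Finset.sum_filter, WithLp.ofLp_sum, Finset.sum_apply, PiLp.smul_apply]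
  refine Fintype.sum_congr _ _ fun A => ?_
  split_ifs <;> simp_all [Finset.nonempty_iff_ne_empty]

lemma norm_toLp_specPart_le (hp1 : 1 ≤ p) (hp2 : p ≤ 2) (J : Finset (Fin n))
    (f : (Fin n → Bool) → ℂ) :
    ‖toLp p (specPart J f)‖ ≤ π / 4 * ‖toLp p fun x => (gradLenJ J f x : ℂ)‖ := by
  have : Fact (1 ≤ ENNReal.ofReal p) := ⟨ENNReal.one_le_ofReal.2 hp1⟩
  set G := ‖toLp p fun x => (gradLenJ J f x : ℂ)‖
  have hbound : ∀ θ ∈ Set.uIoc 0 (π / 2),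
      ‖(sin θ / 2) • toLp p (gradientAverage J (cos θ) f)‖ ≤ G / 2 := by
    intro θ hθ
    rw [Set.uIoc_of_le (by positivity)] at hθ
    have hsin : 0 < sin θ := sin_pos_of_pos_of_lt_pi hθ.1 (by linarith [hθ.2, pi_pos])
    calc ‖(sin θ / 2) • toLp p (gradientAverage J (cos θ) f)‖
        = sin θ / 2 * ‖toLp p (gradientAverage J (cos θ) f)‖ := by
          rw [norm_smul, Real.norm_of_nonneg (by positivity)]
      _ ≤ sin θ / 2 * ((sin θ)⁻¹ * G) := by
          gcongr
          exact norm_toLp_gradientAverage_le (cos_sq_add_sin_sq θ) hsin hp1 hp2 J f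
      _ = G / 2 := by field_simp
  calc ‖toLp p (specPart J f)‖ ≤ G / 2 * |π / 2 - 0| := by
        rw [toLp_specPart_eq_integral]
        exact intervalIntegral.norm_integral_le_of_norm_le_const hbound
    _ = π / 4 * G := by
        rw [sub_zero, abs_of_pos (by positivity)]
        ring

end LpNorm

end DiscreteCube

open DiscreteCube

theorem cube_partial_poincare_inequality_general (n : ℕ) (p : ℝ)
    (hp1 : 1 ≤ p) (hp2 : p ≤ 2) (J : Finset (Fin n)) (f : (Fin n → Bool) → ℂ) :
    cLp p (specPart J f) ≤ (π / 4) * rLp p (gradLenJ J f) := by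
  have hp : 0 < p := by linarith
  rw [rLp_eq_cLp, cLp_eq_norm_toLp_div hp, cLp_eq_norm_toLp_div hp, mul_div_assoc']
  gcongr
  exact norm_toLp_specPart_le hp1 hp2 J f

/-- **Poincaré inequality for a partial set of coordinates.** For every `n ≥ 1`,
`1 ≤ p ≤ 2`, `𝒥 ⊆ {1,…,n}` and `f : Ω_n → ℂ`,
`‖𝒱_𝒥(f)‖_p ≤ (π/4) ‖ |∇_𝒥 f| ‖_p`. -/
theorem cube_partial_poincare_inequality (n : ℕ) (hn : 1 ≤ n) (p : ℝ)
    (hp1 : 1 ≤ p) (hp2 : p ≤ 2) (J : Finset (Fin n)) (f : (Fin n → Bool) → ℂ) :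
    cLp p (specPart J f) ≤ (π / 4) * rLp p (gradLenJ J f) :=
  cube_partial_poincare_inequality_general n p hp1 hp2 J f
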